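/- arXiv:2307.10671 — 2 statements merged into one kernel-verified Lean document; each statement's English description precedes it below -/
import Mathlib

section
/- Let N ≥ 1 and let A ⊆ ℝ^N be not relatively compact (equivalently, unbounded). Then nBC∞I(A) is infinitely pointwise 𝔠-lineable: for every f ∈ nBC∞I(A) there exists a countable family (W_k)_{k∈ℕ} of linear subspaces of the space of functions ℝ^N → ℝ such that for every k ∈ ℕ: dim(W_k) = 𝔠, f ∈ W_k ⊆ nBC∞I(A) ∪ {0}, and W_k ∩ W_l = span{f} for every l ∈ ℕ with l ≠ k. -/
open MeasureTheory Filter Topology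

noncomputable section

/-- Euclidean space `ℝ^N`. -/
abbrev RN (N : ℕ) := EuclideanSpace ℝ (Fin N)

/-- The space `X = C^∞(ℝ^N) ∩ ⋂_{p ∈ [1,∞)} L^p(ℝ^N)` of infinitely differentiable
functions that are `p`-integrable for every real `p ≥ 1`. -/
def SmoothIntegrable (N : ℕ) : Set (RN N → ℝ) :=
  {f | ContDiff ℝ (⊤ : ℕ∞) f ∧
       ∀ p : ℝ, 1 ≤ p → MemLp f (ENNReal.ofReal p) volume}

/-- `f` is unbounded on `A`, i.e. `sup_{x ∈ A} |f x| = +∞`. -/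
def UnboundedOn {N : ℕ} (A : Set (RN N)) (f : RN N → ℝ) : Prop :=
  ∀ C : ℝ, ∃ x ∈ A, C < |f x|

/-- `nBC∞I(A) = {f ∈ X : f is unbounded on A}`. -/
def nBCI {N : ℕ} (A : Set (RN N)) : Set (RN N → ℝ) :=
  {f | f ∈ SmoothIntegrable N ∧ UnboundedOn A f}

/-! Pick `y` with `f y ≠ 0` and a `2`-separated family `z k n` (`k n : ℕ`) of points of `A` at
distance `≥ 2` from `y`. For `t ∈ (1, 2)` let `g_k(t)` carry a bump of height
`(1 + |f (z k n)|) * t ^ n` at each `z k n`, with radii so small that `g_k(t)` lies in every `Lᵖ`,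
and put `W_k = span (f, g_k(t) : 1 < t < 2)`. At the centres a combination `∑ c_t g_k(t)` takes
the values `(1 + |f (z k n)|) * ∑ c_t t ^ n`, and a nonzero exponential sum with bases `> 1` is
unbounded; hence the `g_k(t)` are independent (`dim W_k = 𝔠`) and every element of `W_k` outside
`span {f}` is unbounded on `A`. Different rows have disjoint supports avoiding `y`, which forces
`W_k ⊓ W_l = span {f}`. -/

open Metric Set Submodule Function Cardinal
open scoped ENNReal

universe u

theorem exists_seq_mem_separated_of_not_isBounded {α : Type*} [PseudoMetricSpace α] {A : Set α}
    (hA : ¬ Bornology.IsBounded A) (x : α) {δ : ℝ} (hδ : 0 ≤ δ) :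
    ∃ c : ℕ → α, (∀ n, c n ∈ A) ∧ (∀ n, δ ≤ dist x (c n)) ∧
      Pairwise fun m n => δ ≤ dist (c m) (c n) := by
  have hfar : ∀ r : ℝ, ∃ a ∈ A, r < dist a x := by
    intro r
    by_contra! h
    exact hA ((isBounded_iff_subset_closedBall x).2 ⟨r, fun a ha => mem_closedBall.2 (h a ha)⟩)
  choose a haA ha using hfar
  set c : ℕ → α := fun n => a ((fun r => dist (a r) x + δ)^[n] δ)
  have hsucc : ∀ n, dist (c n) x + δ < dist (c (n + 1)) x := fun n => by
    simp only [c, iterate_succ_apply']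
    exact ha _
  have hmono : Monotone fun n => dist (c n) x :=
    monotone_nat_of_le_succ fun n => by linarith [hsucc n]
  have hgap : ∀ {m n}, m < n → δ ≤ dist (c m) (c n) := fun {m n} hmn => by
    linarith [hsucc m, hmono (Nat.succ_le_of_lt hmn), dist_triangle (c n) (c m) x,
      dist_comm (c m) (c n)]
  refine ⟨c, fun n => haA _, fun n => ?_, fun m n hmn => ?_⟩
  · rw [dist_comm]
    exact (ha δ).le.trans (hmono (Nat.zero_le n))
  · rcases hmn.lt_or_gt with h | h
    · exact hgap h
    · rw [dist_comm]
      exact hgap h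

theorem exists_separated_of_not_isBounded {α ι : Type*} [PseudoMetricSpace α] [Countable ι]
    {A : Set α} (hA : ¬ Bornology.IsBounded A) (x : α) {δ : ℝ} (hδ : 0 ≤ δ) :
    ∃ c : ι → α, (∀ i, c i ∈ A) ∧ (∀ i, δ ≤ dist x (c i)) ∧
      Pairwise fun i j => δ ≤ dist (c i) (c j) := by
  obtain ⟨e, he⟩ := Countable.exists_injective_nat ι
  obtain ⟨c, hcA, hxc, hc⟩ := exists_seq_mem_separated_of_not_isBounded hA x hδ
  exact ⟨c ∘ e, fun i => hcA _, fun i => hxc _, hc.comp_of_injective he⟩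

theorem tendsto_abs_sum_mul_pow_atTop {c : ℝ →₀ ℝ} (hc : c ≠ 0)
    (hc₁ : ∀ t ∈ c.support, 1 < t) :
    Tendsto (fun n : ℕ => |c.sum fun t a => a * t ^ n|) atTop atTop := by
  have hne : c.support.Nonempty := Finsupp.support_nonempty_iff.2 hc
  set t₀ := c.support.max' hne
  have ht₀ : t₀ ∈ c.support := c.support.max'_mem hne
  have hct₀ : c t₀ ≠ 0 := Finsupp.mem_support_iff.1 ht₀
  -- every other exponential is `o(t₀ ^ n)`, so the term at the largest base dominates
  have hrest : (fun n : ℕ => ∑ t ∈ c.support.erase t₀, c t * t ^ n) =o[atTop]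
      fun n => c t₀ * t₀ ^ n := by
    refine Asymptotics.IsLittleO.fun_sum fun t ht => ?_
    have hlt : t < t₀ := lt_of_le_of_ne (c.support.le_max' t (Finset.mem_of_mem_erase ht))
      (Finset.ne_of_mem_erase ht)
    exact ((isLittleO_pow_pow_of_lt_left (by linarith [hc₁ t (Finset.mem_of_mem_erase ht)]) hlt
      ).const_mul_left (c t)).const_mul_right hct₀
  have hsplit (n : ℕ) : (c.sum fun t a => a * t ^ n) =
      ∑ t ∈ c.support.erase t₀, c t * t ^ n + c t₀ * t₀ ^ n := by
    rw [Finsupp.sum, ← Finset.add_sum_erase _ _ ht₀, add_comm]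
  have ht₀₁ : 1 < |t₀| := (hc₁ t₀ ht₀).trans_le (le_abs_self t₀)
  have hlead : Tendsto (fun n : ℕ => ‖c t₀ * t₀ ^ n‖) atTop atTop := by
    simp only [norm_mul, norm_pow, Real.norm_eq_abs]
    exact (tendsto_pow_atTop_atTop_of_one_lt ht₀₁).const_mul_atTop (abs_pos.2 hct₀)
  simpa only [hsplit, Real.norm_eq_abs] using
    hrest.right_isBigO_add.trans_tendsto_norm_atTop hlead

section PowerValues

variable {α : Type*} {G : ℝ → α → ℝ} {T : Set ℝ} {z : ℕ → α} {h : ℕ → ℝ}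

theorem linearCombination_apply_eq_mul_sum {l : ℝ →₀ ℝ} (hl : l ∈ Finsupp.supported ℝ ℝ T)
    (hG : ∀ t ∈ T, ∀ n, G t (z n) = h n * t ^ n) (n : ℕ) :
    Finsupp.linearCombination ℝ G l (z n) = h n * l.sum fun t a => a * t ^ n := by
  rw [Finsupp.linearCombination_apply, Finsupp.sum, Finset.sum_apply, Finsupp.sum,
    Finset.mul_sum]
  refine Finset.sum_congr rfl fun t ht => ?_
  rw [Pi.smul_apply, smul_eq_mul, hG t (hl ht)]
  ring

theorem linearIndepOn_of_apply_eq_mul_pow (hT : T ⊆ Ioi 1) (hh : ∀ n, h n ≠ 0)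
    (hG : ∀ t ∈ T, ∀ n, G t (z n) = h n * t ^ n) : LinearIndepOn ℝ G T := by
  rw [linearIndepOn_iff]
  intro l hl hl0
  by_contra hne
  have hzero (n : ℕ) : (l.sum fun t a => a * t ^ n) = 0 := by
    have := congrFun hl0 (z n)
    rw [linearCombination_apply_eq_mul_sum hl hG] at this
    exact (mul_eq_zero.1 this).resolve_left (hh n)
  have := tendsto_abs_sum_mul_pow_atTop hne fun t ht => hT (hl ht)
  simp only [hzero, abs_zero] at this
  exact not_tendsto_const_atTop _ _ this

end PowerValues

theorem rank_span_insert_image {K : Type*} {ι M : Type u} [Field K] [AddCommGroup M]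
    [Module K M] {G : ι → M} {T : Set ι} (hG : LinearIndepOn K G T) (hT : T.Infinite) (f : M) :
    Module.rank K (span K (insert f (G '' T))) = #T := by
  have hcard : #(G '' T) = #T := mk_image_eq_of_injOn _ _ hG.injOn
  have : Infinite T := hT.to_subtype
  apply le_antisymm
  · calc Module.rank K (span K (insert f (G '' T)))
        ≤ #(insert f (G '' T) : Set M) := rank_span_le _
      _ ≤ #(G '' T) + 1 := mk_insert_le
      _ = #T := by rw [hcard, add_one_eq (aleph0_le_mk T)]
  · calc #T = Module.rank K (span K (G '' T)) := by rw [rank_span_set hG.id_image, hcard]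
      _ ≤ Module.rank K (span K (insert f (G '' T))) := rank_mono (span_mono (subset_insert _ _))

theorem support_subset_of_mem_span {α R M : Type*} [Semiring R] [AddCommMonoid M] [Module R M]
    {s : Set (α → M)} {S : Set α} (hs : ∀ g ∈ s, support g ⊆ S) {u : α → M}
    (hu : u ∈ span R s) : support u ⊆ S := by
  induction hu using span_induction with
  | mem g hg => exact hs g hg
  | zero => simp
  | add g g' _ _ hg hg' => exact (support_add g g').trans (union_subset hg hg')
  | smul a g _ hg => exact (support_const_smul_subset a g).trans hg

theorem span_insert_inf_span_insert_eq_span_singleton {α K : Type*} [Field K] {f : α → K}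
    {s s' : Set (α → K)} {S S' : Set α} (hs : ∀ g ∈ s, support g ⊆ S)
    (hs' : ∀ g ∈ s', support g ⊆ S') (hSS' : Disjoint S S') {y : α} (hyS : y ∉ S)
    (hyS' : y ∉ S') (hfy : f y ≠ 0) :
    span K (insert f s) ⊓ span K (insert f s') = span K {f} := by
  refine le_antisymm ?_ (le_inf (span_mono (by simp)) (span_mono (by simp)))
  rintro w ⟨hw, hw'⟩
  obtain ⟨a, u, hu, rfl⟩ := mem_span_insert.1 hw
  obtain ⟨b, v, hv, hab⟩ := mem_span_insert.1 hw'
  have huS := support_subset_of_mem_span hs hu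
  have hvS' := support_subset_of_mem_span hs' hv
  -- evaluating at `y`, where every function of `s` and `s'` vanishes, separates the `f`-parts
  have hab' : a = b := by
    have := congrFun hab y
    simp only [Pi.add_apply, Pi.smul_apply, smul_eq_mul, notMem_support.1 fun h => hyS (huS h),
      notMem_support.1 fun h => hyS' (hvS' h), add_zero] at this
    exact mul_right_cancel₀ hfy this
  subst hab'
  obtain rfl : u = v := add_left_cancel hab
  obtain rfl : u = 0 := support_eq_empty_iff.1 <| eq_empty_of_forall_notMem fun x hx =>
    disjoint_left.1 hSS' (huS hx) (hvS' hx)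
  rw [add_zero]
  exact smul_mem _ _ (mem_span_singleton_self f)

def smoothIntegrableSubmodule (N : ℕ) : Submodule ℝ (RN N → ℝ) where
  carrier := SmoothIntegrable N
  add_mem' := fun ⟨hf, hfp⟩ ⟨hg, hgp⟩ => ⟨hf.add hg, fun p hp => (hfp p hp).add (hgp p hp)⟩
  zero_mem' := ⟨contDiff_const, fun _ _ => MemLp.zero⟩
  smul_mem' := fun a _ ⟨hf, hfp⟩ => ⟨hf.const_smul a, fun p hp => (hfp p hp).const_smul a⟩

section Unbounded

variable {N : ℕ} {A : Set (RN N)} {f : RN N → ℝ}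

theorem UnboundedOn.smul (hf : UnboundedOn A f) {a : ℝ} (ha : a ≠ 0) : UnboundedOn A (a • f) := by
  intro C
  obtain ⟨x, hxA, hx⟩ := hf (C / |a|)
  refine ⟨x, hxA, ?_⟩
  rw [Pi.smul_apply, smul_eq_mul, abs_mul]
  exact (div_lt_iff₀' (abs_pos.2 ha)).1 hx

theorem unboundedOn_of_mem_span_insert (hf : UnboundedOn A f) {z : ℕ → RN N} (hzA : ∀ n, z n ∈ A)
    {G : ℝ → RN N → ℝ} {T : Set ℝ} (hT : T ⊆ Ioi 1)
    (hG : ∀ t ∈ T, ∀ n, G t (z n) = (1 + |f (z n)|) * t ^ n) {w : RN N → ℝ}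
    (hw : w ∈ span ℝ (insert f (G '' T))) (hw0 : w ≠ 0) : UnboundedOn A w := by
  obtain ⟨a, u, hu, rfl⟩ := mem_span_insert.1 hw
  obtain ⟨l, hl, rfl⟩ := (Finsupp.mem_span_image_iff_linearCombination ℝ).1 hu
  rcases eq_or_ne l 0 with rfl | hl0
  · rw [map_zero, add_zero] at hw0 ⊢
    exact hf.smul (by rintro rfl; exact hw0 (zero_smul ℝ f))
  intro C
  obtain ⟨n, hn⟩ := ((tendsto_abs_sum_mul_pow_atTop hl0 fun t ht => hT (hl ht)).eventually_gt_atTop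
    (max C |a|)).exists
  refine ⟨z n, hzA n, ?_⟩
  rw [Pi.add_apply, Pi.smul_apply, smul_eq_mul, linearCombination_apply_eq_mul_sum hl hG]
  set S := l.sum fun t a => a * t ^ n
  set F := f (z n)
  obtain ⟨hCS, haS⟩ := max_lt_iff.1 hn
  -- the factor `1 + |F|` in the bump heights absorbs the contribution of `a • f`
  calc C < |S| := hCS
    _ ≤ |S| + |F| * (|S| - |a|) := le_add_of_nonneg_right (by nlinarith [abs_nonneg F])
    _ = |(1 + |F|) * S| - |a * F| := by
        rw [abs_mul, abs_mul, abs_of_pos (by positivity : 0 < 1 + |F|)]; ring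
    _ ≤ |a * F + (1 + |F|) * S| := by
        have := abs_sub_abs_le_abs_sub ((1 + |F|) * S) (-(a * F))
        rwa [abs_neg, sub_neg_eq_add, add_comm ((1 + |F|) * S)] at this

end Unbounded

section BumpSeries

variable {E : Type*} [NormedAddCommGroup E] [NormedSpace ℝ E] [HasContDiffBump E] {z : ℕ → E}

def bumpSeries (φ : ∀ n, ContDiffBump (z n)) (a : ℕ → ℝ) (x : E) : ℝ :=
  ∑' n, a n * φ n x

variable (φ : ∀ n, ContDiffBump (z n)) (a : ℕ → ℝ)

theorem support_bumpSeries_subset : support (bumpSeries φ a) ⊆ ⋃ n, ball (z n) (φ n).rOut := by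
  intro x hx
  by_contra hxS
  simp only [mem_iUnion, mem_ball, not_exists, not_lt] at hxS
  exact hx (by simp [bumpSeries, (φ _).zero_of_le_dist (hxS _)])

theorem bumpSeries_eq_of_forall_ne {x : E} {n : ℕ} (h : ∀ m ≠ n, (φ m).rOut ≤ dist x (z m)) :
    bumpSeries φ a x = a n * φ n x :=
  tsum_eq_single n fun m hm => by rw [(φ m).zero_of_le_dist (h m hm), mul_zero]

variable {φ} (hφ : ∀ n, (φ n).rOut ≤ 1 / 2) (hz : Pairwise fun m n => 2 ≤ dist (z m) (z n))
include hφ hz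

theorem bumpSeries_eq_of_dist_lt_one {x : E} {n : ℕ} (hx : dist x (z n) < 1) :
    bumpSeries φ a x = a n * φ n x :=
  bumpSeries_eq_of_forall_ne φ a fun m hm => by
    linarith [hφ m, hz hm, dist_triangle (z m) x (z n), dist_comm x (z m)]

theorem bumpSeries_apply_center (n : ℕ) : bumpSeries φ a (z n) = a n := by
  rw [bumpSeries_eq_of_dist_lt_one a hφ hz (by rw [dist_self]; exact one_pos),
    (φ n).one_of_mem_closedBall (mem_closedBall_self (φ n).rIn_pos.le), mul_one]

theorem contDiff_bumpSeries : ContDiff ℝ (⊤ : ℕ∞) (bumpSeries φ a) := by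
  refine contDiff_iff_contDiffAt.2 fun x => ?_
  by_cases hx : ∃ n, dist x (z n) < 1
  · obtain ⟨n, hn⟩ := hx
    have hloc : bumpSeries φ a =ᶠ[𝓝 x] fun y => a n * φ n y := by
      filter_upwards [ball_mem_nhds x (sub_pos.2 hn)] with y hy
      exact bumpSeries_eq_of_dist_lt_one a hφ hz
        (by linarith [mem_ball.1 hy, dist_triangle y x (z n)])
    exact ((φ n).contDiff.const_smul (a n)).contDiffAt.congr_of_eventuallyEq hloc
  · push Not at hx
    have hloc : bumpSeries φ a =ᶠ[𝓝 x] fun _ => 0 := by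
      filter_upwards [ball_mem_nhds x one_half_pos] with y hy
      refine notMem_support.1 fun hy' => ?_
      obtain ⟨n, hn⟩ := mem_iUnion.1 (support_bumpSeries_subset φ a hy')
      linarith [hx n, mem_ball.1 hy, mem_ball.1 hn, hφ n, dist_triangle x y (z n), dist_comm x y]
    exact contDiffAt_const.congr_of_eventuallyEq hloc

theorem memLp_bumpSeries [MeasurableSpace E] [BorelSpace E] (μ : Measure E) {p : ℝ≥0∞}
    (hp₀ : p ≠ 0) (hp : p ≠ ∞)
    (hsum : ∑' n, ‖a n‖ₑ ^ p.toReal * μ (ball (z n) (φ n).rOut) ≠ ∞) :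
    MemLp (bumpSeries φ a) p μ := by
  have hp₀' : 0 < p.toReal := ENNReal.toReal_pos hp₀ hp
  refine ⟨(contDiff_bumpSeries a hφ hz).continuous.aestronglyMeasurable, ?_⟩
  rw [eLpNorm_lt_top_iff_lintegral_rpow_enorm_lt_top hp₀ hp]
  have hbound (x : E) : ‖bumpSeries φ a x‖ₑ ^ p.toReal ≤
      ∑' n, (ball (z n) (φ n).rOut).indicator (fun _ => ‖a n‖ₑ ^ p.toReal) x := by
    by_cases hx : ∃ n, x ∈ ball (z n) (φ n).rOut
    · obtain ⟨n, hn⟩ := hx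
      rw [bumpSeries_eq_of_dist_lt_one a hφ hz (by linarith [mem_ball.1 hn, hφ n])]
      calc ‖a n * φ n x‖ₑ ^ p.toReal ≤ ‖a n‖ₑ ^ p.toReal := by
            gcongr
            rw [enorm_le_iff_norm_le, norm_mul]
            exact mul_le_of_le_one_right (norm_nonneg _)
              (by rw [Real.norm_of_nonneg (φ n).nonneg]; exact (φ n).le_one)
        _ = (ball (z n) (φ n).rOut).indicator (fun _ => ‖a n‖ₑ ^ p.toReal) x :=
            (indicator_of_mem hn (fun _ => ‖a n‖ₑ ^ p.toReal)).symm
        _ ≤ _ := ENNReal.le_tsum n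
    · rw [notMem_support.1 fun hx' => hx (mem_iUnion.1 (support_bumpSeries_subset φ a hx')),
        enorm_zero, ENNReal.zero_rpow_of_pos hp₀']
      exact zero_le
  calc ∫⁻ x, ‖bumpSeries φ a x‖ₑ ^ p.toReal ∂μ
      ≤ ∫⁻ x, ∑' n, (ball (z n) (φ n).rOut).indicator (fun _ => ‖a n‖ₑ ^ p.toReal) x ∂μ :=
        lintegral_mono hbound
    _ = ∑' n, ‖a n‖ₑ ^ p.toReal * μ (ball (z n) (φ n).rOut) := by
        rw [lintegral_tsum fun n => (measurable_const.indicator measurableSet_ball).aemeasurable]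
        simp only [lintegral_indicator_const measurableSet_ball]
    _ < ∞ := hsum.lt_top

end BumpSeries

theorem summable_rpow_mul_inv_pow_succ {H : ℕ → ℝ} (hH : ∀ n, 1 ≤ H n) (p : ℝ) :
    Summable fun n => H n ^ p * (2 * H n)⁻¹ ^ (n + 1) := by
  refine summable_geometric_two.of_norm_bounded_eventually_nat ?_
  filter_upwards [eventually_ge_atTop ⌈p⌉₊] with n hn
  have hH₀ : 0 < H n := one_pos.trans_le (hH n)
  have hp : H n ^ p ≤ H n ^ (n + 1) := by
    rw [← Real.rpow_natCast]
    exact Real.rpow_le_rpow_of_exponent_le (hH n)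
      (by push_cast; linarith [Nat.le_ceil p, (Nat.cast_le (α := ℝ)).2 hn])
  rw [Real.norm_of_nonneg (by positivity), mul_inv, mul_pow, ← mul_assoc, inv_pow (H n),
    mul_comm (H n ^ p), mul_assoc]
  calc 2⁻¹ ^ (n + 1) * (H n ^ p * (H n ^ (n + 1))⁻¹)
      ≤ 2⁻¹ ^ (n + 1) * 1 := by
        gcongr
        exact mul_inv_le_one_of_le₀ hp (by positivity)
    _ ≤ (1 / 2) ^ n := by
        rw [mul_one, one_div, pow_succ]
        exact mul_le_of_le_one_right (by positivity) (by norm_num)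

section PowerBumps

variable (w : ℕ → ℝ)

-- `(1 + |w n|) * 2 ^ n` bounds the heights for `|t| ≤ 2`; the exponent `n + 1` makes
-- `height ^ p * radius` summable for every `p` (`summable_rpow_mul_inv_pow_succ`).
def powerBumpRadius (n : ℕ) : ℝ := (2 * ((1 + |w n|) * 2 ^ n))⁻¹ ^ (n + 1)

theorem powerBumpRadius_pos (n : ℕ) : 0 < powerBumpRadius w n := by
  unfold powerBumpRadius
  positivity

theorem powerBumpRadius_le_half (n : ℕ) : powerBumpRadius w n ≤ 1 / 2 := by
  have h1 : 1 ≤ (1 + |w n|) * 2 ^ n := one_le_mul_of_one_le_of_one_le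
    (le_add_of_nonneg_right (abs_nonneg _)) (one_le_pow₀ one_le_two)
  calc powerBumpRadius w n ≤ (2 * ((1 + |w n|) * 2 ^ n))⁻¹ :=
        pow_le_of_le_one (by positivity) (inv_le_one_of_one_le₀ (by linarith)) n.succ_ne_zero
    _ ≤ 1 / 2 := by
        rw [one_div]
        exact inv_anti₀ two_pos (by linarith)

variable {E : Type*} [NormedAddCommGroup E] [NormedSpace ℝ E] [HasContDiffBump E] (z : ℕ → E)

def powerBump (n : ℕ) : ContDiffBump (z n) where
  rIn := powerBumpRadius w n / 2
  rOut := powerBumpRadius w n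
  rIn_pos := half_pos (powerBumpRadius_pos w n)
  rIn_lt_rOut := half_lt_self (powerBumpRadius_pos w n)

def powerBumpSeries (t : ℝ) : E → ℝ :=
  bumpSeries (powerBump w z) fun n => (1 + |w n|) * t ^ n

theorem support_powerBumpSeries_subset (t : ℝ) :
    support (powerBumpSeries w z t) ⊆ ⋃ n, ball (z n) (1 / 2) :=
  (support_bumpSeries_subset _ _).trans
    (iUnion_mono fun n => ball_subset_ball (powerBumpRadius_le_half w n))

variable {z} (hz : Pairwise fun m n => 2 ≤ dist (z m) (z n))
include hz

theorem powerBumpSeries_apply (t : ℝ) (n : ℕ) :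
    powerBumpSeries w z t (z n) = (1 + |w n|) * t ^ n :=
  bumpSeries_apply_center _ (powerBumpRadius_le_half w) hz n

theorem contDiff_powerBumpSeries (t : ℝ) : ContDiff ℝ (⊤ : ℕ∞) (powerBumpSeries w z t) :=
  contDiff_bumpSeries _ (powerBumpRadius_le_half w) hz

theorem memLp_powerBumpSeries [Nontrivial E] [FiniteDimensional ℝ E] [MeasurableSpace E]
    [BorelSpace E] (μ : Measure E) [μ.IsAddHaarMeasure] {t : ℝ} (ht : |t| ≤ 2) {p : ℝ≥0∞}
    (hp₀ : p ≠ 0) (hp : p ≠ ∞) : MemLp (powerBumpSeries w z t) p μ := by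
  refine memLp_bumpSeries _ (powerBumpRadius_le_half w) hz μ hp₀ hp ?_
  set H : ℕ → ℝ := fun n => (1 + |w n|) * 2 ^ n
  have hH (n : ℕ) : 1 ≤ H n := one_le_mul_of_one_le_of_one_le
    (le_add_of_nonneg_right (abs_nonneg _)) (one_le_pow₀ one_le_two)
  have hterm (n : ℕ) : ‖(1 + |w n|) * t ^ n‖ₑ ^ p.toReal * μ (ball (z n) (powerBumpRadius w n)) ≤
      ENNReal.ofReal (H n ^ p.toReal * powerBumpRadius w n) * μ (ball 0 1) := by
    have hr := powerBumpRadius_pos w n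
    have hheight : ‖(1 + |w n|) * t ^ n‖ₑ ≤ ENNReal.ofReal (H n) := by
      rw [Real.enorm_eq_ofReal_abs, abs_mul, abs_pow, abs_of_pos (by positivity : 0 < 1 + |w n|)]
      exact ENNReal.ofReal_le_ofReal (by simp only [H]; gcongr)
    have hball : μ (ball (z n) (powerBumpRadius w n)) ≤
        ENNReal.ofReal (powerBumpRadius w n) * μ (ball 0 1) := by
      rw [Measure.addHaar_ball μ _ hr.le]
      gcongr
      exact pow_le_of_le_one hr.le ((powerBumpRadius_le_half w n).trans (by norm_num))
        Module.finrank_pos.ne'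
    calc _ ≤ ENNReal.ofReal (H n) ^ p.toReal * (ENNReal.ofReal (powerBumpRadius w n) *
          μ (ball 0 1)) := by gcongr
      _ = _ := by
        rw [ENNReal.ofReal_rpow_of_nonneg (by linarith [hH n]) ENNReal.toReal_nonneg,
          ENNReal.ofReal_mul (by positivity), mul_assoc]
  refine ne_top_of_le_ne_top ?_ (ENNReal.tsum_le_tsum hterm)
  rw [ENNReal.tsum_mul_right, ← ENNReal.ofReal_tsum_of_nonneg
    (f := fun n => H n ^ p.toReal * powerBumpRadius w n)
    (fun n => by have := powerBumpRadius_pos w n; positivity)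
    (summable_rpow_mul_inv_pow_succ hH p.toReal)]
  exact ENNReal.mul_ne_top ENNReal.ofReal_ne_top measure_ball_lt_top.ne

end PowerBumps

theorem powerBumpSeries_mem_smoothIntegrable {N : ℕ} [Nontrivial (RN N)] (w : ℕ → ℝ)
    {z : ℕ → RN N} (hz : Pairwise fun m n => 2 ≤ dist (z m) (z n)) {t : ℝ} (ht : |t| ≤ 2) :
    powerBumpSeries w z t ∈ SmoothIntegrable N :=
  ⟨contDiff_powerBumpSeries w hz t, fun _ hp => memLp_powerBumpSeries w hz volume ht
    (ENNReal.ofReal_pos.2 (by linarith)).ne' ENNReal.ofReal_ne_top⟩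

theorem nBCI_infinitely_pointwise_continuum_lineable_general (N : ℕ)
    (A : Set (RN N)) (hA : ¬ Bornology.IsBounded A) :
    ∀ f ∈ nBCI A, ∃ W : ℕ → Submodule ℝ (RN N → ℝ), ∀ k : ℕ,
      Module.rank ℝ (W k) = Cardinal.continuum ∧
      f ∈ W k ∧ (W k : Set (RN N → ℝ)) ⊆ nBCI A ∪ {0} ∧
      ∀ l : ℕ, l ≠ k → W k ⊓ W l = Submodule.span ℝ {f} := by
  rintro f ⟨hfX, hfA⟩
  have : Nontrivial (RN N) := not_subsingleton_iff_nontrivial.1 fun _ =>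
    hA subsingleton_of_subsingleton.finite.isBounded
  obtain ⟨y, -, hy⟩ := hfA 0
  obtain ⟨c, hcA, hyc, hc⟩ := exists_separated_of_not_isBounded (ι := ℕ × ℕ) hA y zero_le_two
  set z : ℕ → ℕ → RN N := fun k n => c (k, n)
  have hz (k : ℕ) : Pairwise fun m n => 2 ≤ dist (z k m) (z k n) :=
    hc.comp_of_injective (Prod.mk_right_injective k)
  set G : ℕ → ℝ → RN N → ℝ := fun k => powerBumpSeries (fun n => f (z k n)) (z k)
  have hG (k : ℕ) : ∀ t ∈ Ioo (1 : ℝ) 2, ∀ n, G k t (z k n) = (1 + |f (z k n)|) * t ^ n :=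
    fun t _ n => powerBumpSeries_apply _ (hz k) t n
  set S : ℕ → Set (RN N) := fun k => ⋃ n, ball (z k n) (1 / 2)
  have hyS (k : ℕ) : y ∉ S k := by
    simp only [S, mem_iUnion, mem_ball, not_exists, not_lt]
    exact fun n => by linarith [hyc (k, n), dist_comm y (z k n)]
  refine ⟨fun k => span ℝ (insert f (G k '' Ioo 1 2)), fun k =>
    ⟨?_, subset_span (mem_insert _ _), fun w hw => ?_, fun l hlk => ?_⟩⟩
  · rw [rank_span_insert_image (linearIndepOn_of_apply_eq_mul_pow Ioo_subset_Ioi_self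
      (fun n => by positivity) (hG k)) (Ioo_infinite one_lt_two), mk_Ioo_real one_lt_two]
  · rcases eq_or_ne w 0 with rfl | hw0
    · exact Or.inr rfl
    refine Or.inl ⟨(span_le (p := smoothIntegrableSubmodule N)).2 (insert_subset hfX ?_) hw,
      unboundedOn_of_mem_span_insert hfA (fun n => hcA _) Ioo_subset_Ioi_self (hG k) hw hw0⟩
    rintro _ ⟨t, ht, rfl⟩
    exact powerBumpSeries_mem_smoothIntegrable _ (hz k) (abs_le.2 ⟨by linarith [ht.1], ht.2.le⟩)
  · refine span_insert_inf_span_insert_eq_span_singleton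
      (fun g ⟨t, _, hg⟩ => hg ▸ support_powerBumpSeries_subset _ _ t)
      (fun g ⟨t, _, hg⟩ => hg ▸ support_powerBumpSeries_subset _ _ t) ?_ (hyS k) (hyS l)
      (abs_pos.1 hy)
    refine disjoint_iUnion_left.2 fun n => disjoint_iUnion_right.2 fun m => ball_disjoint_ball ?_
    linarith [@hc (k, n) (l, m) fun h => hlk (Prod.ext_iff.1 h).1.symm]

/-- `nBC∞I(A)` is infinitely pointwise `𝔠`-lineable. -/
theorem nBCI_infinitely_pointwise_continuum_lineable (N : ℕ) (hN : 1 ≤ N)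
    (A : Set (RN N)) (hA : ¬ Bornology.IsBounded A) :
    ∀ f ∈ nBCI A, ∃ W : ℕ → Submodule ℝ (RN N → ℝ), ∀ k : ℕ,
      Module.rank ℝ (W k) = Cardinal.continuum ∧
      f ∈ W k ∧ (W k : Set (RN N → ℝ)) ⊆ nBCI A ∪ {0} ∧
      ∀ l : ℕ, l ≠ k → W k ⊓ W l = Submodule.span ℝ {f} :=
  nBCI_infinitely_pointwise_continuum_lineable_general N A hA
end
end

section
/- Let N ≥ 1 and let A ⊆ ℝ^N be not relatively compact (equivalently, unbounded). Then nBC∞I(A) is infinitely pointwise 𝔠-dense lineable in C^∞(ℝ^N): for every f ∈ nBC∞I(A) there exists a countable family (W_k)_{k∈ℕ} of linear subspaces of the space of functions ℝ^N → ℝ such that for every k ∈ ℕ: dim(W_k) = 𝔠; f ∈ W_k ⊆ nBC∞I(A) ∪ {0}; W_k ∩ W_l = span{f} for every l ≠ k; and W_k is dense in C^∞(ℝ^N) for the topology of uniform convergence on compacta of all derivatives, meaning: for every infinitely differentiable g : ℝ^N → ℝ, every compact set K ⊆ ℝ^N, every n ∈ ℕ, and every ε > 0, there exists w ∈ W_k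 such that ‖D^j(w − g)(x)‖ < ε for all derivative orders j ≤ n and all x ∈ K (where D^j denotes the j-th total (iterated Fréchet) derivative). -/
/-!
Since `f` is continuous and unbounded on `A`, there are points `y n ∈ A` with `n < |f (y n)|`
and `‖y n‖ + 2 ≤ ‖y (n + 1)‖`. Around the even points `y (2 m)` put bumps of height `exp (m t)`
and radius `exp (-m²)`: their sum is smooth and, the radii shrinking so fast, lies in every `Lᵖ`.
Fix an injection `τ` of the labels `(k, g, R)` (`g` smooth, `k, R ∈ ℕ`) into `(0, ∞)` and let
`W k` be spanned by `f` and by the functions equal to `g` on the ball of radius `R + 1` and to the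
bump sum of rate `τ (k, g, R)` far out. A nontrivial combination is unbounded on `A`: at the odd
points only its `f`-part survives, and if that vanishes, at the even points it is an exponential
sum `∑ cᵢ exp (m tᵢ)` with distinct `tᵢ > 0`. So all these generators are linearly independent,
which yields `dim W k = 𝔠` and `W k ⊓ W l = span {f}`; density holds because every `g` is matched
exactly on arbitrarily large balls.
-/

open MeasureTheory Filter Topology

noncomputable section

/-- A set `W` of functions is dense in `C^∞(ℝ^N)` for the topology of uniform convergence
on compacta of all derivatives. -/
def DenseInCinfty {N : ℕ} (W : Set (RN N → ℝ)) : Prop :=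
  ∀ g : RN N → ℝ, ContDiff ℝ (⊤ : ℕ∞) g → ∀ K : Set (RN N), IsCompact K → ∀ n : ℕ,
    ∀ ε : ℝ, 0 < ε →
      ∃ w ∈ W, ∀ j : ℕ, j ≤ n → ∀ x ∈ K, ‖iteratedFDeriv ℝ j (w - g) x‖ < ε

open Metric Real Function Cardinal
open scoped ENNReal

section Escape

variable {E : Type*} [NormedAddCommGroup E] [ProperSpace E]

theorem exists_mem_lt_abs_lt_norm {A : Set E} {f : E → ℝ} (hf : Continuous f)
    (hu : ∀ C : ℝ, ∃ x ∈ A, C < |f x|) (C R : ℝ) : ∃ x ∈ A, C < |f x| ∧ R < ‖x‖ := by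
  obtain ⟨M, hM⟩ := (isCompact_closedBall (0 : E) R).exists_bound_of_continuousOn hf.continuousOn
  obtain ⟨x, hxA, hx⟩ := hu (max C M)
  refine ⟨x, hxA, (le_max_left _ _).trans_lt hx, ?_⟩
  by_contra! hxR
  have := hM x (by simpa using hxR)
  rw [Real.norm_eq_abs] at this
  exact (le_max_right C M).trans_lt hx |>.not_ge this

theorem exists_seq_mem_lt_abs {A : Set E} {f : E → ℝ} (hf : Continuous f)
    (hu : ∀ C : ℝ, ∃ x ∈ A, C < |f x|) :
    ∃ y : ℕ → E, (∀ n, y n ∈ A) ∧ (∀ n : ℕ, n < |f (y n)|) ∧ ∀ n, ‖y n‖ + 2 ≤ ‖y (n + 1)‖ := by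
  choose x hxA hxf hxR using exists_mem_lt_abs_lt_norm hf hu
  let y : ℕ → E := fun n => Nat.rec (x 0 0) (fun n yn => x ((n + 1 : ℕ) : ℝ) (‖yn‖ + 2)) n
  refine ⟨y, fun n => ?_, fun n => ?_, fun n => (hxR _ _).le⟩
  · cases n <;> exact hxA _ _
  · cases n with
    | zero => exact_mod_cast (hxf 0 0 : (0 : ℝ) < |f (y 0)|)
    | succ n => exact hxf _ _

end Escape

section Sparse

variable {E : Type*} [NormedAddCommGroup E] {y : ℕ → E}

theorem norm_add_two_le_of_lt (hy : ∀ n, ‖y n‖ + 2 ≤ ‖y (n + 1)‖) {m n : ℕ} (h : m < n) :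
    ‖y m‖ + 2 ≤ ‖y n‖ := by
  induction n, h using Nat.le_induction with
  | base => exact hy m
  | succ n _ ih => linarith [hy n, norm_nonneg (y n)]

theorem two_le_dist_of_ne (hy : ∀ n, ‖y n‖ + 2 ≤ ‖y (n + 1)‖) {m n : ℕ} (h : m ≠ n) :
    2 ≤ dist (y m) (y n) := by
  rcases h.lt_or_gt with h | h
  · linarith [norm_add_two_le_of_lt hy h, norm_sub_norm_le (y n) (y m), dist_eq_norm' (y m) (y n)]
  · linarith [norm_add_two_le_of_lt hy h, norm_sub_norm_le (y m) (y n), dist_eq_norm (y m) (y n)]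

theorem tendsto_norm_atTop_of_norm_add_two_le (hy : ∀ n, ‖y n‖ + 2 ≤ ‖y (n + 1)‖) :
    Tendsto (fun n => ‖y n‖) atTop atTop := by
  have h : ∀ n : ℕ, (n : ℝ) ≤ ‖y n‖ := fun n => by
    induction n with
    | zero => simp
    | succ n ih => push_cast; linarith [hy n]
  exact tendsto_atTop_mono h tendsto_natCast_atTop_atTop

theorem pairwise_two_le_dist_even (hy : ∀ n, ‖y n‖ + 2 ≤ ‖y (n + 1)‖) :
    Pairwise fun m n => 2 ≤ dist (y (2 * m)) (y (2 * n)) :=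
  fun _ _ h => two_le_dist_of_ne hy (by omega)

theorem tendsto_norm_comp_of_le (hy : ∀ n, ‖y n‖ + 2 ≤ ‖y (n + 1)‖) {u : ℕ → ℕ}
    (hu : ∀ m, m ≤ u m) : Tendsto (fun m => ‖y (u m)‖) atTop atTop :=
  (tendsto_norm_atTop_of_norm_add_two_le hy).comp (tendsto_atTop_mono hu tendsto_id)

end Sparse

section DisjointSupports

variable {ι X F : Type*} [NormedAddCommGroup F] {g : ι → X → F}

theorem enorm_finsum_rpow_of_pairwise_disjoint (hg : Pairwise (Disjoint on fun i => support (g i)))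
    {q : ℝ} (hq : 0 < q) (x : X) : ‖∑ᶠ i, g i x‖ₑ ^ q = ∑' i, ‖g i x‖ₑ ^ q := by
  by_cases h : ∃ i, g i x ≠ 0
  · obtain ⟨i, hi⟩ := h
    have hj : ∀ j, j ≠ i → g j x = 0 := fun j hji => by
      by_contra hj
      exact Set.disjoint_left.1 (hg hji) hj hi
    rw [finsum_eq_single _ i hj, tsum_eq_single i fun j hji => by simp [hj j hji, hq]]
  · push Not at h
    simp [h, hq]

theorem lintegral_enorm_finsum_rpow [Countable ι] [MeasurableSpace X] {μ : Measure X}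
    (hg : Pairwise (Disjoint on fun i => support (g i))) (hmeas : ∀ i, AEStronglyMeasurable (g i) μ)
    {q : ℝ} (hq : 0 < q) :
    ∫⁻ x, ‖∑ᶠ i, g i x‖ₑ ^ q ∂μ = ∑' i, ∫⁻ x, ‖g i x‖ₑ ^ q ∂μ := by
  simp_rw [enorm_finsum_rpow_of_pairwise_disjoint hg hq]
  exact lintegral_tsum fun i => (hmeas i).enorm.pow_const q

end DisjointSupports

theorem lintegral_enorm_rpow_le_of_support_subset {X : Type*} [MeasurableSpace X] {μ : Measure X}
    {g : X → ℝ} {s : Set X} (hs : MeasurableSet s) (hgs : support g ⊆ s) {M : ℝ}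
    (hM : ∀ x, |g x| ≤ M) {q : ℝ} (hq : 0 < q) :
    ∫⁻ x, ‖g x‖ₑ ^ q ∂μ ≤ ENNReal.ofReal M ^ q * μ s := by
  rw [← lintegral_indicator_const hs]
  refine lintegral_mono fun x => ?_
  by_cases hx : x ∈ s
  · rw [Set.indicator_of_mem hx, Real.enorm_eq_ofReal_abs]
    exact ENNReal.rpow_le_rpow (ENNReal.ofReal_le_ofReal (hM x)) hq.le
  · simp [notMem_support.1 fun h => hx (hgs h), hq]

theorem summable_exp_mul_sub_sq (a : ℝ) : Summable fun m : ℕ => exp (m * a - m ^ 2) := by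
  refine .of_nonneg_of_le (fun _ => (exp_pos _).le) (fun m => ?_)
    (summable_exp_neg_nat.mul_left (exp ((a + 1) ^ 2 / 4)))
  rw [← exp_add, exp_le_exp]
  nlinarith [sq_nonneg ((m : ℝ) - (a + 1) / 2)]

theorem exp_neg_sq_le_one (x : ℝ) : exp (-x ^ 2) ≤ 1 :=
  exp_le_one_iff.2 (neg_nonpos.2 (sq_nonneg x))

section LocallyFinite

variable {E : Type*} [NormedAddCommGroup E] {c : ℕ → E}

theorem locallyFinite_ball_one (hc : Tendsto (fun m => ‖c m‖) atTop atTop) :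
    LocallyFinite fun m => ball (c m) 1 := by
  intro x
  refine ⟨ball x 1, ball_mem_nhds x one_pos, ?_⟩
  have hfar : ∀ᶠ m in cofinite, ‖x‖ + 2 ≤ ‖c m‖ := by
    rw [Nat.cofinite_eq_atTop]
    exact hc.eventually_ge_atTop _
  refine (eventually_cofinite.1 hfar).subset fun m ⟨z, hzc, hzx⟩ hm => ?_
  rw [mem_ball] at hzc hzx
  have := norm_le_norm_add_norm_sub' (c m) x
  linarith [dist_triangle (c m) z x, dist_comm z (c m), dist_eq_norm (c m) x]

end LocallyFinite

section Spike

variable {E : Type*} [NormedAddCommGroup E] [InnerProductSpace ℝ E]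

def spike (c : E) (m : ℕ) : ContDiffBump c where
  rIn := exp (-(m : ℝ) ^ 2) / 2
  rOut := exp (-(m : ℝ) ^ 2)
  rIn_pos := by positivity
  rIn_lt_rOut := half_lt_self (by positivity)

theorem spike_eq_zero_of_one_le_dist {c x : E} (h : 1 ≤ dist x c) (m : ℕ) : spike c m x = 0 :=
  (spike c m).zero_of_le_dist ((exp_neg_sq_le_one m).trans h)

theorem support_spike_subset (c : E) (m : ℕ) : support (spike c m) ⊆ ball c 1 := by
  rw [ContDiffBump.support_eq]
  exact ball_subset_ball (exp_neg_sq_le_one m)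

def spikeSum (c : ℕ → E) (t : ℝ) (x : E) : ℝ :=
  ∑ᶠ m : ℕ, exp (m * t) * spike (c m) m x

variable {c : ℕ → E}

theorem support_spike_mul_subset (t : ℝ) (m : ℕ) :
    support (fun x => exp (m * t) * spike (c m) m x) ⊆ ball (c m) 1 :=
  (support_mul_subset_right _ _).trans (support_spike_subset _ _)

theorem spikeSum_apply_self (hsep : Pairwise fun m n => 2 ≤ dist (c m) (c n)) (t : ℝ) (m : ℕ) :
    spikeSum c t (c m) = exp (m * t) := by
  rw [spikeSum, finsum_eq_single _ m fun n hnm => by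
      rw [spike_eq_zero_of_one_le_dist (by linarith [hsep hnm.symm]), mul_zero],
    (spike (c m) m).one_of_mem_closedBall (mem_closedBall_self (spike (c m) m).rIn_pos.le), mul_one]

theorem spikeSum_eq_zero {x : E} (hx : ∀ m, 1 ≤ dist x (c m)) (t : ℝ) : spikeSum c t x = 0 :=
  finsum_eq_zero_of_forall_eq_zero fun m => by rw [spike_eq_zero_of_one_le_dist (hx m), mul_zero]

theorem contDiff_spikeSum (hc : Tendsto (fun m => ‖c m‖) atTop atTop) (t : ℝ) :
    ContDiff ℝ (⊤ : ℕ∞) (spikeSum c t) :=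
  contMDiff_iff_contDiff.1 <| contMDiff_finsum
    (fun m => contMDiff_iff_contDiff.2 (contDiff_const.mul (spike (c m) m).contDiff))
    ((locallyFinite_ball_one hc).subset fun m => support_spike_mul_subset t m)

variable [FiniteDimensional ℝ E] [MeasurableSpace E] [BorelSpace E] (μ : Measure E)
  [μ.IsAddHaarMeasure]

theorem lintegral_enorm_spike_rpow_le [Nontrivial E] (c : E) (t : ℝ) (m : ℕ) {q : ℝ} (hq : 0 < q) :
    ∫⁻ x, ‖exp (m * t) * spike c m x‖ₑ ^ q ∂μ ≤
      ENNReal.ofReal (exp (m * (t * q) - m ^ 2)) * μ (ball 0 1) := by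
  have hbound : ∀ x, |exp (m * t) * spike c m x| ≤ exp (m * t) := fun x => by
    rw [abs_of_nonneg (mul_nonneg (exp_pos _).le (spike c m).nonneg)]
    exact mul_le_of_le_one_right (exp_pos _).le (spike c m).le_one
  have hr : exp (-(m : ℝ) ^ 2) ^ Module.finrank ℝ E ≤ exp (-(m : ℝ) ^ 2) :=
    pow_le_of_le_one (exp_pos _).le (exp_neg_sq_le_one m) Module.finrank_pos.ne'
  calc ∫⁻ x, ‖exp (m * t) * spike c m x‖ₑ ^ q ∂μ
      ≤ ENNReal.ofReal (exp (m * t)) ^ q * μ (ball c (spike c m).rOut) :=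
        lintegral_enorm_rpow_le_of_support_subset measurableSet_ball
          ((support_mul_subset_right _ _).trans (spike c m).support_eq.subset) hbound hq
    _ = ENNReal.ofReal (exp (m * (t * q))) *
          (ENNReal.ofReal (exp (-(m : ℝ) ^ 2) ^ Module.finrank ℝ E) * μ (ball 0 1)) := by
        rw [Measure.addHaar_ball_of_pos μ c (spike c m).rOut_pos,
          ENNReal.ofReal_rpow_of_nonneg (exp_pos _).le hq.le, ← exp_mul, mul_assoc]
        rfl
    _ ≤ ENNReal.ofReal (exp (m * (t * q) - m ^ 2)) * μ (ball 0 1) := by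
        rw [← mul_assoc, ← ENNReal.ofReal_mul (exp_pos _).le, sub_eq_add_neg, exp_add]
        gcongr

theorem memLp_spikeSum (hsep : Pairwise fun m n => 2 ≤ dist (c m) (c n))
    (hc : Tendsto (fun m => ‖c m‖) atTop atTop) (t : ℝ) {p : ℝ≥0∞} (hp : p ≠ ⊤) :
    MemLp (spikeSum c t) p μ := by
  have hmeas := (contDiff_spikeSum hc t).continuous.aestronglyMeasurable (μ := μ)
  rcases eq_or_ne p 0 with rfl | hp0
  · exact memLp_zero_iff_aestronglyMeasurable.2 hmeas
  refine ⟨hmeas, (eLpNorm_lt_top_iff_lintegral_rpow_enorm_lt_top hp0 hp).2 ?_⟩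
  have hq : 0 < p.toReal := ENNReal.toReal_pos hp0 hp
  have : Nontrivial E := ⟨c 0, c 1, fun h => by
    have h01 : 2 ≤ dist (c 0) (c 1) := hsep zero_ne_one
    rw [h, dist_self] at h01
    norm_num at h01⟩
  calc ∫⁻ x, ‖spikeSum c t x‖ₑ ^ p.toReal ∂μ
      = ∑' m : ℕ, ∫⁻ x, ‖exp (m * t) * spike (c m) m x‖ₑ ^ p.toReal ∂μ :=
        lintegral_enorm_finsum_rpow (fun m n hmn =>
          (ball_disjoint_ball (by linarith [hsep hmn])).mono
            (support_spike_mul_subset t m) (support_spike_mul_subset t n))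
          (fun m => (continuous_const.mul (spike (c m) m).continuous).aestronglyMeasurable) hq
    _ ≤ ∑' m : ℕ, ENNReal.ofReal (exp (m * (t * p.toReal) - m ^ 2)) * μ (ball 0 1) :=
        ENNReal.tsum_le_tsum fun m => lintegral_enorm_spike_rpow_le μ (c m) t m hq
    _ = ENNReal.ofReal (∑' m : ℕ, exp (m * (t * p.toReal) - m ^ 2)) * μ (ball 0 1) := by
        rw [ENNReal.tsum_mul_right, ENNReal.ofReal_tsum_of_nonneg (fun _ => (exp_pos _).le)
          (summable_exp_mul_sub_sq _)]
    _ < ⊤ := ENNReal.mul_lt_top ENNReal.ofReal_lt_top measure_ball_lt_top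

end Spike

theorem tendsto_abs_sum_mul_exp_atTop {ι : Type*} {d : ι →₀ ℝ} (hd : d ≠ 0) {t : ι → ℝ}
    (ht : Injective t) (htpos : ∀ i, 0 < t i) :
    Tendsto (fun m : ℕ => |d.sum fun i a => a * exp (m * t i)|) atTop atTop := by
  classical
  obtain ⟨b, hb, hmax⟩ := d.support.exists_max_image t (Finsupp.support_nonempty_iff.2 hd)
  have hfactor : ∀ m : ℕ, (d.sum fun i a => a * exp (m * t i)) =
      exp (m * t b) * d.sum fun i a => a * exp (m * (t i - t b)) := fun m => by
    simp only [Finsupp.sum, Finset.mul_sum]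
    refine Finset.sum_congr rfl fun i _ => ?_
    rw [mul_left_comm, ← exp_add]
    ring_nf
  -- every other exponent `t i - t b` is negative, so only the `b`-term survives
  have hlim : Tendsto (fun m : ℕ => d.sum fun i a => a * exp (m * (t i - t b))) atTop
      (𝓝 (d b)) := by
    have : d b = ∑ i ∈ d.support, if i = b then d i else 0 := by simp [hb]
    rw [this]
    refine tendsto_finsetSum _ fun i hi => ?_
    split_ifs with hib
    · subst hib
      simp
    · have hlt : t i - t b < 0 := sub_neg.2 ((hmax i hi).lt_of_ne fun h => hib (ht h))
      simpa using ((tendsto_exp_atBot.comp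
        (tendsto_natCast_atTop_atTop.atTop_mul_const_of_neg hlt)).const_mul (d i))
  simp_rw [hfactor, abs_mul, abs_of_pos (exp_pos _)]
  exact (tendsto_exp_atTop.comp (tendsto_natCast_atTop_atTop.atTop_mul_const (htpos b)))
    |>.atTop_mul_pos (abs_pos.2 (Finsupp.mem_support_iff.1 hb)) hlim.abs

section LinearAlgebra

variable {ι R M : Type*} [Ring R] [AddCommGroup M] [Module R M] {v : ι → M}

theorem LinearIndependent.span_image_inf_span_image (hv : LinearIndependent R v) (s t : Set ι) :
    Submodule.span R (v '' s) ⊓ Submodule.span R (v '' t) = Submodule.span R (v '' (s ∩ t)) := by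
  refine le_antisymm (fun x ⟨hs, ht⟩ => ?_)
    (le_inf (Submodule.span_mono (Set.image_mono Set.inter_subset_left))
      (Submodule.span_mono (Set.image_mono Set.inter_subset_right)))
  obtain ⟨l, hl, rfl⟩ := (Finsupp.mem_span_image_iff_linearCombination R).1 hs
  obtain ⟨l', hl', hll'⟩ := (Finsupp.mem_span_image_iff_linearCombination R).1 ht
  rw [hv.finsuppLinearCombination_injective.eq_iff] at hll'
  subst hll'
  rw [Finsupp.mem_span_image_iff_linearCombination, Finsupp.supported_inter]
  exact ⟨l', ⟨hl, hl'⟩, rfl⟩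

theorem LinearIndependent.rank_span_image [StrongRankCondition R] (hv : LinearIndependent R v)
    (s : Set ι) : Module.rank R (Submodule.span R (v '' s)) = #(v '' s) :=
  rank_span_set (hv.linearIndepOn s).id_image

end LinearAlgebra

theorem mk_continuous_le_continuum (X : Type*) [TopologicalSpace X]
    [TopologicalSpace.SeparableSpace X] : #{g : X → ℝ // Continuous g} ≤ 𝔠 := by
  obtain ⟨D, hDc, hD⟩ := TopologicalSpace.exists_countable_dense X
  have : Countable D := hDc.to_subtype
  have hrestrict : Injective fun g : {g : X → ℝ // Continuous g} => D.domRestrict g.1 :=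
    fun g₁ g₂ h => Subtype.ext (Continuous.ext_on hD g₁.2 g₂.2 fun x hx => congrFun h ⟨x, hx⟩)
  calc #{g : X → ℝ // Continuous g} ≤ #(D → ℝ) := mk_le_of_injective hrestrict
    _ = 𝔠 ^ lift.{0} #D := by rw [mk_arrow, mk_real, lift_continuum]
    _ ≤ 𝔠 ^ ℵ₀ := power_le_power_left continuum_ne_zero (by simp)
    _ = 𝔠 := continuum_power_aleph0

theorem exists_injective_pos_of_mk_le {ι : Type*} (h : #ι ≤ 𝔠) :
    ∃ τ : ι → ℝ, Injective τ ∧ ∀ i, 0 < τ i := by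
  obtain ⟨e⟩ := lift_mk_le'.1
    (by simpa [mk_Ioi_real] using h : lift.{0} #ι ≤ lift #(Set.Ioi (0 : ℝ)))
  exact ⟨fun i => e i, fun i j h => e.injective (Subtype.ext h), fun i => (e i).2⟩

section Glue

variable {E : Type*} [NormedAddCommGroup E] [InnerProductSpace ℝ E]

def cutoff (R : ℕ) : ContDiffBump (0 : E) where
  rIn := R + 1
  rOut := R + 2
  rIn_pos := by positivity
  rIn_lt_rOut := by linarith

def glue (R : ℕ) (g h : E → ℝ) : E → ℝ := h + cutoff (E := E) R * (g - h)

variable {R : ℕ} {g h : E → ℝ}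

theorem glue_eqOn_closedBall : Set.EqOn (glue R g h) g (closedBall 0 (R + 1)) := fun x hx => by
  simp [glue, (cutoff R).one_of_mem_closedBall hx]

theorem glue_apply_of_le_norm {x : E} (hx : R + 2 ≤ ‖x‖) : glue R g h x = h x := by
  simp [glue, (cutoff R).zero_of_le_dist (x := x) (by rw [dist_zero_right]; exact hx)]

theorem contDiff_glue {n : ℕ∞} (hg : ContDiff ℝ n g) (hh : ContDiff ℝ n h) :
    ContDiff ℝ n (glue R g h) :=
  hh.add ((cutoff R).contDiff.mul (hg.sub hh))

theorem memLp_glue [FiniteDimensional ℝ E] [MeasurableSpace E] [BorelSpace E] {μ : Measure E}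
    [IsFiniteMeasureOnCompacts μ] {p : ℝ≥0∞} (hg : Continuous g) (hh : Continuous h)
    (hhp : MemLp h p μ) : MemLp (glue R g h) p μ :=
  hhp.add (((cutoff R).continuous.mul (hg.sub hh)).memLp_of_hasCompactSupport
    (cutoff R).hasCompactSupport.mul_right)

end Glue

def smoothLpSubmodule {E : Type*} [NormedAddCommGroup E] [NormedSpace ℝ E] [MeasurableSpace E]
    (μ : Measure E) : Submodule ℝ (E → ℝ) where
  carrier := {f | ContDiff ℝ (⊤ : ℕ∞) f ∧ ∀ p : ℝ, 1 ≤ p → MemLp f (ENNReal.ofReal p) μ}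
  add_mem' := fun ⟨hf, hfp⟩ ⟨hg, hgp⟩ => ⟨hf.add hg, fun p hp => (hfp p hp).add (hgp p hp)⟩
  zero_mem' := ⟨contDiff_const, fun _ _ => MemLp.zero⟩
  smul_mem' := fun a _ ⟨hf, hfp⟩ => ⟨contDiff_const.smul hf, fun p hp => (hfp p hp).const_smul a⟩

section Generator

variable {E : Type*} [NormedAddCommGroup E] [InnerProductSpace ℝ E]

/-- A label `(k, g, R)` names a generator of the `k`-th subspace which agrees with `g` on
`closedBall 0 (R + 1)`; the label `none` names `f`, which lies in every subspace. -/
abbrev Label (E : Type*) [NormedAddCommGroup E] [NormedSpace ℝ E] : Type _ :=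
  ℕ × {g : E → ℝ // ContDiff ℝ (⊤ : ℕ∞) g} × ℕ

def labelsOf (k : ℕ) : Set (Option (Label E)) := {o | ∀ q ∈ o, q.1 = k}

theorem labelsOf_inter_labelsOf {k l : ℕ} (h : k ≠ l) :
    labelsOf (E := E) k ∩ labelsOf l = {none} := by
  ext (_ | q)
  · simp [labelsOf]
  · simp only [labelsOf, Set.mem_inter_iff, Set.mem_ofPred_eq, Option.mem_def, Option.some.injEq,
      forall_eq', Set.mem_singleton_iff, reduceCtorEq, iff_false]
    omega

theorem mk_label_le [TopologicalSpace.SeparableSpace E] : #(Label E) ≤ 𝔠 := by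
  have hsmooth : #{g : E → ℝ // ContDiff ℝ (⊤ : ℕ∞) g} ≤ 𝔠 :=
    (mk_le_of_injective (f := fun g => (⟨g.1, g.2.continuous⟩ : {g : E → ℝ // Continuous g}))
      fun g₁ g₂ h => Subtype.ext (Subtype.mk.inj h)).trans (mk_continuous_le_continuum E)
  simp only [Label, mk_prod, lift_uzero, mk_nat, lift_aleph0]
  calc ℵ₀ * (#{g : E → ℝ // ContDiff ℝ (⊤ : ℕ∞) g} * ℵ₀) ≤ ℵ₀ * (𝔠 * ℵ₀) := by gcongr
    _ = 𝔠 := by rw [continuum_mul_aleph0, aleph0_mul_continuum]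

theorem mk_labelsOf [TopologicalSpace.SeparableSpace E] (k : ℕ) : #(labelsOf (E := E) k) = 𝔠 := by
  refine le_antisymm ?_ ?_
  · calc #(labelsOf (E := E) k) ≤ #(Option (Label E)) := mk_set_le _
      _ = #(Label E) + 1 := mk_option
      _ ≤ 𝔠 + 1 := by gcongr; exact mk_label_le
      _ = 𝔠 := add_one_of_aleph0_le aleph0_le_continuum
  · have hconst : Injective fun r : ℝ => (⟨some (k, ⟨fun _ => r, contDiff_const⟩, 0),
        by rintro _ ⟨⟩; rfl⟩ : labelsOf (E := E) k) := by
      intro r s h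
      have h' := congrArg Subtype.val h
      simp only [Option.some.injEq, Prod.mk.injEq, Subtype.mk.injEq] at h'
      exact congrFun h'.2.1 0
    simpa [mk_real] using lift_mk_le_lift_mk_of_injective hconst

/-- The spikes sit at the even points `y (2 * m)`; the odd points are kept free of them. -/
def generator (f : E → ℝ) (y : ℕ → E) (τ : Label E → ℝ) : Option (Label E) → E → ℝ
  | none => f
  | some q => glue q.2.2 q.2.1 (spikeSum (fun m => y (2 * m)) (τ q))

variable {f : E → ℝ} {y : ℕ → E} {τ : Label E → ℝ}

theorem eventually_generator_some_apply_odd (hy : ∀ n, ‖y n‖ + 2 ≤ ‖y (n + 1)‖) (q : Label E) :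
    ∀ᶠ m in atTop, generator f y τ (some q) (y (2 * m + 1)) = 0 := by
  filter_upwards [(tendsto_norm_comp_of_le hy (u := fun m => 2 * m + 1) fun m => by omega)
    |>.eventually_ge_atTop ((q.2.2 : ℝ) + 2)] with m hm
  rw [generator, glue_apply_of_le_norm hm]
  exact spikeSum_eq_zero (fun n => by
    linarith [two_le_dist_of_ne hy (show 2 * m + 1 ≠ 2 * n by omega)]) _

theorem eventually_generator_some_apply_even (hy : ∀ n, ‖y n‖ + 2 ≤ ‖y (n + 1)‖) (q : Label E) :
    ∀ᶠ m : ℕ in atTop, generator f y τ (some q) (y (2 * m)) = exp (m * τ q) := by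
  filter_upwards [(tendsto_norm_comp_of_le hy (u := fun m => 2 * m) fun m => by omega)
    |>.eventually_ge_atTop ((q.2.2 : ℝ) + 2)] with m hm
  rw [generator, glue_apply_of_le_norm hm]
  exact spikeSum_apply_self (pairwise_two_le_dist_even hy) _ m

theorem linearCombination_generator_apply (c : Option (Label E) →₀ ℝ) (x : E) :
    Finsupp.linearCombination ℝ (generator f y τ) c x =
      c none * f x + c.some.sum fun q a => a * generator f y τ (some q) x := by
  rw [Finsupp.linearCombination_option, Pi.add_apply, Finsupp.linearCombination_apply]
  simp only [Finsupp.sum, Finset.sum_apply, Pi.smul_apply, smul_eq_mul]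
  rfl

theorem eventually_linearCombination_generator_apply_odd (hy : ∀ n, ‖y n‖ + 2 ≤ ‖y (n + 1)‖)
    (c : Option (Label E) →₀ ℝ) :
    ∀ᶠ m in atTop, Finsupp.linearCombination ℝ (generator f y τ) c (y (2 * m + 1)) =
      c none * f (y (2 * m + 1)) := by
  filter_upwards [(eventually_all_finset c.some.support).2 fun q _ =>
    eventually_generator_some_apply_odd (f := f) (τ := τ) hy q] with m hm
  rw [linearCombination_generator_apply, Finsupp.sum, Finset.sum_eq_zero fun q hq => by
    rw [hm q hq, mul_zero], add_zero]

theorem eventually_linearCombination_generator_apply_even (hy : ∀ n, ‖y n‖ + 2 ≤ ‖y (n + 1)‖)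
    (c : Option (Label E) →₀ ℝ) :
    ∀ᶠ m : ℕ in atTop, Finsupp.linearCombination ℝ (generator f y τ) c (y (2 * m)) =
      c none * f (y (2 * m)) + c.some.sum fun q a => a * exp (m * τ q) := by
  filter_upwards [(eventually_all_finset c.some.support).2 fun q _ =>
    eventually_generator_some_apply_even (f := f) (τ := τ) hy q] with m hm
  rw [linearCombination_generator_apply]
  exact congrArg _ (Finset.sum_congr rfl fun q hq => by simp only [hm q hq])

theorem exists_lt_abs_linearCombination_generator (hfy : ∀ n : ℕ, n < |f (y n)|)
    (hy : ∀ n, ‖y n‖ + 2 ≤ ‖y (n + 1)‖) (hτ : Injective τ) (hτpos : ∀ q, 0 < τ q)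
    {c : Option (Label E) →₀ ℝ} (hc : c ≠ 0) (C : ℝ) :
    ∃ n, C < |Finsupp.linearCombination ℝ (generator f y τ) c (y n)| := by
  by_cases ha : c none = 0
  · have hsome : c.some ≠ 0 := fun h => hc <| by
      ext (_ | q)
      exacts [ha, by simpa using DFunLike.congr_fun h q]
    obtain ⟨m, hm, heq⟩ := ((tendsto_abs_sum_mul_exp_atTop hsome hτ hτpos).eventually_gt_atTop C
      |>.and (eventually_linearCombination_generator_apply_even hy c)).exists
    exact ⟨2 * m, by rwa [heq, ha, zero_mul, zero_add]⟩
  · have htend : Tendsto (fun m : ℕ => |c none * f (y (2 * m + 1))|) atTop atTop := by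
      simp_rw [abs_mul]
      refine (tendsto_atTop_mono (fun m => ?_) tendsto_natCast_atTop_atTop).const_mul_atTop
        (abs_pos.2 ha)
      have := hfy (2 * m + 1)
      push_cast at this
      linarith
    obtain ⟨m, hm, heq⟩ := ((htend.eventually_gt_atTop C).and
      (eventually_linearCombination_generator_apply_odd hy c)).exists
    exact ⟨2 * m + 1, by rwa [heq]⟩

theorem linearIndependent_generator (hfy : ∀ n : ℕ, n < |f (y n)|)
    (hy : ∀ n, ‖y n‖ + 2 ≤ ‖y (n + 1)‖) (hτ : Injective τ) (hτpos : ∀ q, 0 < τ q) :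
    LinearIndependent ℝ (generator f y τ) := by
  refine linearIndependent_iff.2 fun c hc => by_contra fun hc0 => ?_
  obtain ⟨n, hn⟩ := exists_lt_abs_linearCombination_generator hfy hy hτ hτpos hc0 0
  simp [hc] at hn

theorem span_range_generator_le [FiniteDimensional ℝ E] [MeasurableSpace E] [BorelSpace E]
    {μ : Measure E} [μ.IsAddHaarMeasure] (hf : f ∈ smoothLpSubmodule μ)
    (hy : ∀ n, ‖y n‖ + 2 ≤ ‖y (n + 1)‖) :
    Submodule.span ℝ (Set.range (generator f y τ)) ≤ smoothLpSubmodule μ := by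
  refine Submodule.span_le.2 (Set.range_subset_iff.2 fun o => ?_)
  rcases o with _ | q
  · exact hf
  have hc := tendsto_norm_comp_of_le hy (u := fun m => 2 * m) fun m => by omega
  have hsmooth := contDiff_spikeSum hc (τ q)
  exact ⟨contDiff_glue q.2.1.2 hsmooth, fun p _ => memLp_glue q.2.1.2.continuous hsmooth.continuous
    (memLp_spikeSum μ (pairwise_two_le_dist_even hy) hc _ ENNReal.ofReal_ne_top)⟩

end Generator

theorem denseInCinfty_of_forall_eqOn_ball {N : ℕ} {W : Set (RN N → ℝ)}
    (h : ∀ g : RN N → ℝ, ContDiff ℝ (⊤ : ℕ∞) g → ∀ R : ℕ, ∃ w ∈ W, Set.EqOn w g (ball 0 R)) :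
    DenseInCinfty W := by
  intro g hg K hK n ε hε
  obtain ⟨r, hr⟩ := hK.isBounded.subset_ball 0
  obtain ⟨w, hw, hwg⟩ := h g hg ⌈r⌉₊
  refine ⟨w, hw, fun j _ x hx => ?_⟩
  have hzero : w - g =ᶠ[𝓝 x] 0 :=
    eventually_of_mem (isOpen_ball.mem_nhds (ball_subset_ball (Nat.le_ceil r) (hr hx)))
      fun z hz => sub_eq_zero.2 (hwg hz)
  rw [(hzero.iteratedFDeriv ℝ j).eq_of_nhds]
  simpa using hε

theorem linearCombination_generator_mem_nBCI {N : ℕ} {A : Set (RN N)} {f : RN N → ℝ}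
    {y : ℕ → RN N} {τ : Label (RN N) → ℝ} (hf : f ∈ SmoothIntegrable N) (hyA : ∀ n, y n ∈ A)
    (hfy : ∀ n : ℕ, n < |f (y n)|) (hy : ∀ n, ‖y n‖ + 2 ≤ ‖y (n + 1)‖) (hτ : Injective τ)
    (hτpos : ∀ q, 0 < τ q) {c : Option (Label (RN N)) →₀ ℝ} (hc : c ≠ 0) :
    Finsupp.linearCombination ℝ (generator f y τ) c ∈ nBCI A := by
  refine ⟨span_range_generator_le (τ := τ) (μ := volume) hf hy ?_, fun C => ?_⟩
  · rw [← Finsupp.range_linearCombination]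
    exact LinearMap.mem_range_self _ c
  · obtain ⟨n, hn⟩ := exists_lt_abs_linearCombination_generator hfy hy hτ hτpos hc C
    exact ⟨y n, hyA n, hn⟩

theorem nBCI_infinitely_pointwise_continuum_dense_lineable_in_Cinfty_general (N : ℕ)
    (A : Set (RN N)) :
    ∀ f ∈ nBCI A, ∃ W : ℕ → Submodule ℝ (RN N → ℝ), ∀ k : ℕ,
      Module.rank ℝ (W k) = Cardinal.continuum ∧
      f ∈ W k ∧ (W k : Set (RN N → ℝ)) ⊆ nBCI A ∪ {0} ∧
      (∀ l : ℕ, l ≠ k → W k ⊓ W l = Submodule.span ℝ {f}) ∧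
      DenseInCinfty (W k : Set (RN N → ℝ)) := by
  rintro f ⟨hf, hu⟩
  obtain ⟨y, hyA, hfy, hy⟩ := exists_seq_mem_lt_abs hf.1.continuous hu
  obtain ⟨τ, hτ, hτpos⟩ := exists_injective_pos_of_mk_le (mk_label_le (E := RN N))
  have hli := linearIndependent_generator hfy hy hτ hτpos
  refine ⟨fun k => Submodule.span ℝ (generator f y τ '' labelsOf k), fun k => ⟨?_, ?_, ?_, ?_, ?_⟩⟩
  · rw [hli.rank_span_image, mk_image_eq hli.injective, mk_labelsOf]
  · exact Submodule.subset_span ⟨none, by simp [labelsOf], rfl⟩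
  · intro w hw
    obtain ⟨c, -, rfl⟩ := (Finsupp.mem_span_image_iff_linearCombination ℝ).1 hw
    rcases eq_or_ne c 0 with rfl | hc
    · exact Or.inr (map_zero _)
    · exact Or.inl (linearCombination_generator_mem_nBCI hf hyA hfy hy hτ hτpos hc)
  · intro l hlk
    rw [hli.span_image_inf_span_image, labelsOf_inter_labelsOf hlk.symm, Set.image_singleton]
    rfl
  · refine denseInCinfty_of_forall_eqOn_ball fun g hg R =>
      ⟨_, Submodule.subset_span ⟨some (k, ⟨g, hg⟩, R), fun _ h => by cases h; rfl, rfl⟩, ?_⟩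
    exact glue_eqOn_closedBall.mono (ball_subset_closedBall.trans
      (closedBall_subset_closedBall (by linarith)))

/-- `nBC∞I(A)` is infinitely pointwise `𝔠`-dense lineable in
`C^∞(ℝ^N)`. -/
theorem nBCI_infinitely_pointwise_continuum_dense_lineable_in_Cinfty (N : ℕ) (hN : 1 ≤ N)
    (A : Set (RN N)) (hA : ¬ Bornology.IsBounded A) :
    ∀ f ∈ nBCI A, ∃ W : ℕ → Submodule ℝ (RN N → ℝ), ∀ k : ℕ,
      Module.rank ℝ (W k) = Cardinal.continuum ∧
      f ∈ W k ∧ (W k : Set (RN N → ℝ)) ⊆ nBCI A ∪ {0} ∧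
      (∀ l : ℕ, l ≠ k → W k ⊓ W l = Submodule.span ℝ {f}) ∧
      DenseInCinfty (W k : Set (RN N → ℝ)) :=
  nBCI_infinitely_pointwise_continuum_dense_lineable_in_Cinfty_general N A
end
end
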